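/- Let H be a finitely generated group with finite generating set Y, and let G be a non-abelian finitely generated group with finite palindromic width k = pw(G, X) with respect to a finite generating set X. Then there exists c ∈ G (possibly c = 1) such that every element of the subgroup H' ≀ G of the restricted regular wreath product H ≀ G — namely the subgroup consisting of all pairs (f, a) where a ∈ G and f : G → H is a finitely supported function taking values in the derived subgroup [H, H] — is a product of at most k + 1 palindromes with respect to the generating set of H ≀ G consisting of the canonical copies of X ∪ {c} and of Y. -/

import Mathlib

open Function

section WreathDefs

variable (G A : Type*) [Group G] [Group A]

/-- The subgroup of finitely supported functions `A → G` (pointwise operations). -/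
def restrictedBase : Subgroup (A → G) where
  carrier := {f | (Function.mulSupport f).Finite}
  one_mem' := by simp [Function.mulSupport_one]
  mul_mem' := fun hf hg => (hf.union hg).subset (Function.mulSupport_mul _ _)
  inv_mem' := fun hf => by simpa [Function.mulSupport_inv] using hf

variable {G A}

lemma shift_mem (a : A) (f : restrictedBase G A) :
    (fun x => (f : A → G) (a * x)) ∈ restrictedBase G A := by
  have h : Function.mulSupport (fun x => (f : A → G) (a * x)) =
      (fun x : A => a * x) ⁻¹' Function.mulSupport (f : A → G) :=
    Function.mulSupport_comp_eq_preimage _ _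
  show (Function.mulSupport _).Finite
  rw [h]
  exact f.2.preimage (mul_right_injective a).injOn

/-- The translation automorphism of the restricted base, `(a • f) x = f (a⁻¹ * x)`. -/
noncomputable def shiftEquiv (a : A) : restrictedBase G A ≃* restrictedBase G A where
  toFun f := ⟨fun x => (f : A → G) (a⁻¹ * x), shift_mem a⁻¹ f⟩
  invFun f := ⟨fun x => (f : A → G) (a * x), shift_mem a f⟩
  left_inv f := by ext x; simp
  right_inv f := by ext x; simp
  map_mul' f g := by ext x; simp

variable (G A)

/-- The translation action of `A` on finitely supported functions `A → G`. -/
noncomputable def wreathAction : A →* MulAut (restrictedBase G A) where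
  toFun a := shiftEquiv a
  map_one' := by ext f x; simp [shiftEquiv]
  map_mul' a b := by ext f x; simp [shiftEquiv, mul_assoc]

/-- The restricted regular wreath product `G ≀ A`. -/
noncomputable abbrev Wreath := restrictedBase G A ⋊[wreathAction G A] A

variable {G A}

/-- The finitely supported function equal to `g` at `1` and trivial elsewhere. -/
noncomputable def atOne (g : G) : restrictedBase G A :=
  letI := Classical.decEq A
  ⟨fun x => if x = 1 then g else 1, by
    apply Set.Finite.subset (Set.finite_singleton (1 : A))
    intro x hx
    simp only [Function.mem_mulSupport] at hx
    by_contra hx1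
    exact hx (if_neg (by simpa using hx1))⟩

/-- The natural generating set of `G ≀ A` built from generating sets of the factors. -/
noncomputable def wreathGens (XB : Set G) (XA : Set A) : Set (Wreath G A) :=
  ((fun g => SemidirectProduct.inl (atOne g)) '' XB) ∪ (SemidirectProduct.inr '' XA)

end WreathDefs

section Palindromes

variable {W : Type*} [Group W]

/-- `g` is a palindrome with respect to `S`: it is the product of a word over `S`
(entries in `S ∪ S⁻¹`) which reads the same forwards and backwards. -/
def IsPalindrome (S : Set W) (g : W) : Prop :=
  ∃ l : List W, (∀ x ∈ l, x ∈ S ∪ S⁻¹) ∧ l.reverse = l ∧ l.prod = g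

/-- `g` is a product of at most `n` palindromes with respect to `S`. -/
def ProdOfPal (S : Set W) (n : ℕ) (g : W) : Prop :=
  ∃ l : List W, l.length ≤ n ∧ (∀ p ∈ l, IsPalindrome S p) ∧ l.prod = g

/-- The palindromic width of a group with respect to `S` (`⊤` if infinite). -/
noncomputable def palWidth (S : Set W) : ℕ∞ :=
  sInf {n : ℕ∞ | ∃ m : ℕ, n = (m : ℕ∞) ∧ ∀ g : W, ProdOfPal S m g}

/-- The word length of `g` with respect to `S`. -/
noncomputable def wordLength (S : Set W) (g : W) : ℕ :=
  sInf {n : ℕ | ∃ l : List W, l.length = n ∧ (∀ x ∈ l, x ∈ S ∪ S⁻¹) ∧ l.prod = g}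

end Palindromes

/-!
Pairing each word over `S` with its reverse, the pairs `(w₁ ⋯ wₙ, wₙ ⋯ w₁)` form a subgroup of
`W × Wᵐᵒᵖ`, and if `(g, 1)` is such a pair then `g` is a palindrome (the word followed by its
reverse). As `G` is non-abelian, for some `c` reversal of words over `X ∪ {c}` is not well
defined on `G`: some word with product `1` has reverse with product `z ≠ 1`. Conjugating by it
moves the reversed word of a letter of `H` from position `1` to position `z⁻¹`, where it
commutes with the reversed word of another letter; hence `[u, v]` placed at `1` has a word whose
reverse is trivial. Conjugating by `G` spreads this over all positions, so every base element
with values in `[H, H]` is a single palindrome, and the `G`-coordinate needs `k` more.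
-/

open MulOpposite SemidirectProduct
open scoped commutatorElement

section ProductSubgroups

variable {A B : Type*} [Group A] [Group B] (K : Subgroup (A × B))

lemma Subgroup.mk_one_inv_mul_mem {a : A} {b₁ b₂ : B} (h₁ : (a, b₁) ∈ K) (h₂ : (a, b₂) ∈ K) :
    ((1 : A), b₁⁻¹ * b₂) ∈ K := by
  simpa using K.mul_mem (K.inv_mem h₁) h₂

lemma Subgroup.mk_conj_one_mem {x g : A} {x' : B} (hx : (x, x') ∈ K) (hg : (g, (1 : B)) ∈ K) :
    (x * g * x⁻¹, (1 : B)) ∈ K := by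
  simpa using K.mul_mem (K.mul_mem hx hg) (K.inv_mem hx)

lemma Subgroup.mk_conj_snd_mem {z g' : B} {g : A} (hz : ((1 : A), z) ∈ K) (hg : (g, g') ∈ K) :
    (g, z * g' * z⁻¹) ∈ K := by
  simpa using K.mul_mem (K.mul_mem hz hg) (K.inv_mem hz)

lemma Subgroup.mk_commutatorElement_one_mem {a b : A} {a' b' : B} (ha : (a, a') ∈ K)
    (hb : (b, b') ∈ K) (h : Commute a' b') : (⁅a, b⁆, (1 : B)) ∈ K := by
  have hab : ⁅(a, a'), (b, b')⁆ ∈ K :=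
    K.mul_mem (K.mul_mem (K.mul_mem ha hb) (K.inv_mem ha)) (K.inv_mem hb)
  rwa [← commutatorElement_eq_one_iff_commute.mpr h]

end ProductSubgroups

section ReversalPairs

variable {W V : Type*} [Group W] [Group V]

def reversalPairs (S : Set W) : Subgroup (W × Wᵐᵒᵖ) :=
  Subgroup.closure ((fun s => (s, op s)) '' S)

variable {S T : Set W}

lemma mk_op_mem_reversalPairs {s : W} (hs : s ∈ S) : (s, op s) ∈ reversalPairs S :=
  Subgroup.subset_closure ⟨s, hs, rfl⟩

lemma reversalPairs_mono (h : T ⊆ S) : reversalPairs T ≤ reversalPairs S :=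
  Subgroup.closure_mono (Set.image_mono h)

lemma map_mem_reversalPairs (f : W →* V) {S : Set V} (hf : f '' T ⊆ S) {p q : W}
    (h : (p, op q) ∈ reversalPairs T) : (f p, op (f q)) ∈ reversalPairs S := by
  have hmap := Subgroup.mem_map_of_mem (f.prodMap (MonoidHom.op f)) h
  rw [reversalPairs, MonoidHom.map_closure, Set.image_image] at hmap
  refine Subgroup.closure_mono ?_ hmap
  rintro _ ⟨s, hs, rfl⟩
  exact ⟨f s, hf ⟨s, hs, rfl⟩, rfl⟩

lemma exists_mk_op_mem_reversalPairs {g : W} (hg : g ∈ Subgroup.closure S) :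
    ∃ g', (g, op g') ∈ reversalPairs S := by
  induction hg using Subgroup.closure_induction with
  | mem s hs => exact ⟨s, mk_op_mem_reversalPairs hs⟩
  | one => exact ⟨1, (reversalPairs S).one_mem⟩
  | mul x y _ _ hx hy =>
    obtain ⟨x', hx⟩ := hx
    obtain ⟨y', hy⟩ := hy
    exact ⟨y' * x', by simpa using (reversalPairs S).mul_mem hx hy⟩
  | inv x _ hx =>
    obtain ⟨x', hx⟩ := hx
    exact ⟨x'⁻¹, by simpa using (reversalPairs S).inv_mem hx⟩

lemma exists_word_of_mem_reversalPairs {p q : W} (h : (p, op q) ∈ reversalPairs S) :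
    ∃ l : List W, (∀ x ∈ l, x ∈ S ∪ S⁻¹) ∧ l.prod = p ∧ l.reverse.prod = q := by
  suffices ∀ pq ∈ reversalPairs S, ∃ l : List W, (∀ x ∈ l, x ∈ S ∪ S⁻¹) ∧
      l.prod = pq.1 ∧ l.reverse.prod = unop pq.2 from this _ h
  intro pq hpq
  induction hpq using Subgroup.closure_induction with
  | mem _ hs =>
    obtain ⟨s, hs, rfl⟩ := hs
    exact ⟨[s], by simp [hs], by simp, by simp⟩
  | one => exact ⟨[], by simp, by simp, by simp⟩
  | mul _ _ _ _ hx hy =>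
    obtain ⟨l, hl, hp, hq⟩ := hx
    obtain ⟨l', hl', hp', hq'⟩ := hy
    exact ⟨l ++ l', fun x hx => (List.mem_append.mp hx).elim (hl x) (hl' x),
      by simp [hp, hp'], by simp [hq, hq']⟩
  | inv _ _ hx =>
    obtain ⟨l, hl, hp, hq⟩ := hx
    refine ⟨(l.map (·⁻¹)).reverse, ?_, by simp [← hp, List.prod_inv_reverse], ?_⟩
    · intro x hx
      obtain ⟨y, hy, rfl⟩ := List.mem_map.mp (List.mem_reverse.mp hx)
      simpa [or_comm] using hl y hy
    · simp [← hq, List.prod_inv_reverse]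

lemma isPalindrome_mul_of_mem_reversalPairs {p q : W} (h : (p, op q) ∈ reversalPairs S) :
    IsPalindrome S (p * q) := by
  obtain ⟨l, hl, rfl, rfl⟩ := exists_word_of_mem_reversalPairs h
  refine ⟨l ++ l.reverse, ?_, by simp, by simp⟩
  simpa using hl

end ReversalPairs

section Palindromes

variable {W V : Type*} [Group W] [Group V] {S : Set W} {T : Set V}

lemma IsPalindrome.map (f : W →* V) (hf : f '' S ⊆ T) {p : W} (hp : IsPalindrome S p) :
    IsPalindrome T (f p) := by
  obtain ⟨l, hl, hrev, rfl⟩ := hp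
  refine ⟨l.map f, ?_, by rw [← List.map_reverse, hrev], List.prod_hom l f⟩
  intro x hx
  obtain ⟨y, hy, rfl⟩ := List.mem_map.mp hx
  rcases hl y hy with hyS | hyS
  · exact Or.inl (hf ⟨y, hyS, rfl⟩)
  · exact Or.inr (by simpa using hf ⟨y⁻¹, hyS, rfl⟩)

lemma ProdOfPal.map (f : W →* V) (hf : f '' S ⊆ T) {n : ℕ} {g : W} (hg : ProdOfPal S n g) :
    ProdOfPal T n (f g) := by
  obtain ⟨l, hlen, hl, rfl⟩ := hg
  refine ⟨l.map f, by simpa using hlen, ?_, List.prod_hom l f⟩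
  intro q hq
  obtain ⟨p, hp, rfl⟩ := List.mem_map.mp hq
  exact (hl p hp).map f hf

lemma ProdOfPal.palindrome_mul {n : ℕ} {p g : W} (hp : IsPalindrome S p)
    (hg : ProdOfPal S n g) : ProdOfPal S (n + 1) (p * g) := by
  obtain ⟨l, hlen, hl, rfl⟩ := hg
  refine ⟨p :: l, by simpa using hlen, ?_, List.prod_cons⟩
  simpa [hp] using hl

lemma prodOfPal_of_palWidth_eq {n : ℕ} (h : palWidth S = n) (g : W) : ProdOfPal S n g := by
  have hne : {n : ℕ∞ | ∃ m : ℕ, n = m ∧ ∀ g : W, ProdOfPal S m g}.Nonempty := by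
    by_contra hempty
    rw [palWidth, Set.not_nonempty_iff_eq_empty.mp hempty, sInf_empty] at h
    exact ENat.top_ne_natCast n h
  obtain ⟨m, hm, hS⟩ := csInf_mem hne
  rw [← palWidth, h, Nat.cast_inj] at hm
  exact hm ▸ hS g

end Palindromes

/-- If no such `c` existed, reversing words over `X` would induce an anti-endomorphism of `G`
fixing every element, forcing `G` to be commutative. -/
lemma exists_one_mk_op_mem_reversalPairs_union_singleton {G : Type*} [Group G] {X : Set G}
    (hX : Subgroup.closure X = ⊤) (hna : ∃ a b : G, a * b ≠ b * a) :
    ∃ c z : G, z ≠ 1 ∧ ((1 : G), op z) ∈ reversalPairs (X ∪ {c}) := by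
  by_contra! h
  have huniq : ∀ c g g₁ g₂ : G, (g, op g₁) ∈ reversalPairs (X ∪ {c}) →
      (g, op g₂) ∈ reversalPairs (X ∪ {c}) → g₁ = g₂ := by
    intro c g g₁ g₂ h₁ h₂
    by_contra hne
    refine h c (g₂ * g₁⁻¹) (mul_inv_eq_one.not.mpr (Ne.symm hne)) ?_
    simpa using (reversalPairs _).mk_one_inv_mul_mem h₁ h₂
  have hfix : ∀ c c' : G, (c, op c') ∈ reversalPairs X → c' = c := fun c c' hc =>
    huniq c c c' c (reversalPairs_mono Set.subset_union_left hc)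
      (mk_op_mem_reversalPairs (Or.inr rfl))
  obtain ⟨a, b, hab⟩ := hna
  obtain ⟨a', ha⟩ := exists_mk_op_mem_reversalPairs (hX ▸ Subgroup.mem_top a)
  obtain ⟨b', hb⟩ := exists_mk_op_mem_reversalPairs (hX ▸ Subgroup.mem_top b)
  have hba : b' * a' = a * b := hfix _ _ (by simpa using (reversalPairs X).mul_mem ha hb)
  rw [hfix _ _ ha, hfix _ _ hb] at hba
  exact hab hba.symm

section RestrictedBase

variable {G A : Type*} [Group G] [Group A]

lemma coe_atOne [DecidableEq A] (g : G) :
    ((atOne g : restrictedBase G A) : A → G) = Pi.mulSingle 1 g := by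
  ext x
  simp only [atOne, Pi.mulSingle_apply]
  congr

lemma coe_wreathAction_atOne [DecidableEq A] (a : A) (g : G) :
    ((wreathAction G A a (atOne g) : restrictedBase G A) : A → G) = Pi.mulSingle a g := by
  ext x
  change ((atOne g : restrictedBase G A) : A → G) (a⁻¹ * x) = _
  simp [coe_atOne, Pi.mulSingle_apply, inv_mul_eq_one, eq_comm]

noncomputable def atOneHom : G →* restrictedBase G A where
  toFun := atOne
  map_one' := by classical exact Subtype.ext (by simp [coe_atOne])
  map_mul' g h := by classical exact Subtype.ext (by simp [coe_atOne, Pi.mulSingle_mul])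

lemma mem_of_forall_wreathAction_atOne_mem {L : Subgroup (restrictedBase G A)}
    {T : Subgroup G} (hL : ∀ a : A, ∀ g ∈ T, wreathAction G A a (atOne g) ∈ L)
    {f : restrictedBase G A} (hf : ∀ x, (f : A → G) x ∈ T) : f ∈ L := by
  classical
  suffices ∀ s : Finset A, ∀ f : restrictedBase G A, Function.mulSupport (f : A → G) ⊆ s →
      (∀ x, (f : A → G) x ∈ T) → f ∈ L from this f.2.toFinset f f.2.coe_toFinset.ge hf
  intro s
  induction s using Finset.induction_on with
  | empty =>
    intro f hs _
    have hf1 : f = 1 := Subtype.ext (Function.mulSupport_eq_empty_iff.mp (by simpa using hs))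
    exact hf1 ▸ L.one_mem
  | insert b s _ ih =>
    intro f hs hf
    set δ := wreathAction G A b (atOne ((f : A → G) b))
    have hδ : δ ∈ L := hL b _ (hf b)
    have hrest : ∀ x, ((δ⁻¹ * f : restrictedBase G A) : A → G) x =
        if x = b then 1 else (f : A → G) x := by
      intro x
      by_cases hx : x = b <;> simp [δ, coe_wreathAction_atOne, hx]
    have hrest_mem : δ⁻¹ * f ∈ L := by
      refine ih _ (fun x hx => ?_) (fun x => ?_)
      · rw [Function.mem_mulSupport, hrest] at hx
        split_ifs at hx with hxb
        · exact absurd rfl hx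
        · exact (Finset.mem_insert.mp (hs hx)).resolve_left hxb
      · rw [hrest]
        split_ifs
        exacts [T.one_mem, hf x]
    simpa only [mul_inv_cancel_left] using L.mul_mem hδ hrest_mem

end RestrictedBase

section WreathPalindromes

variable {H G : Type*} [Group H] [Group G] {Y : Set H} {T : Set G}

lemma image_inr_subset_wreathGens : (inr '' T : Set (Wreath H G)) ⊆ wreathGens Y T :=
  Set.subset_union_right

lemma mk_inl_atOne_commutatorElement_mem_reversalPairs (hY : Subgroup.closure Y = ⊤)
    {z : G} (hz : z ≠ 1) (hzT : ((1 : G), op z) ∈ reversalPairs T) (u v : H) :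
    ((inl (atOne ⁅u, v⁆) : Wreath H G), (1 : (Wreath H G)ᵐᵒᵖ)) ∈
      reversalPairs (wreathGens Y T) := by
  classical
  set K := reversalPairs (wreathGens Y T)
  let j : H →* Wreath H G := inl.comp atOneHom
  have hj : j '' Y ⊆ wreathGens Y T := Set.subset_union_left
  obtain ⟨u', hu⟩ := exists_mk_op_mem_reversalPairs (hY ▸ Subgroup.mem_top u)
  obtain ⟨v', hv⟩ := exists_mk_op_mem_reversalPairs (hY ▸ Subgroup.mem_top v)
  have hzK : ((1 : Wreath H G), op (inr z : Wreath H G)) ∈ K := by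
    simpa using map_mem_reversalPairs inr image_inr_subset_wreathGens hzT
  -- conjugating by `hzK` moves the support of the reversed word for `v` from `1` to `z⁻¹`
  have hv_shift : (j v, op (inl (wreathAction H G z⁻¹ (atOne v')) : Wreath H G)) ∈ K := by
    have := K.mk_conj_snd_mem hzK (map_mem_reversalPairs j hj hv)
    rw [inl_aut, inv_inv]
    rwa [← op_inv, ← op_mul, ← op_mul, ← map_inv, ← mul_assoc] at this
  have hcomm_base : Commute (atOne u' : restrictedBase H G) (wreathAction H G z⁻¹ (atOne v')) := by
    refine Subtype.ext ?_
    rw [Subgroup.coe_mul, Subgroup.coe_mul, coe_atOne, coe_wreathAction_atOne]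
    exact (Pi.mulSingle_commute (f := fun _ : G => H) (inv_ne_one.mpr hz).symm u' v').eq
  have hcomm : Commute (op (j u')) (op (inl (wreathAction H G z⁻¹ (atOne v')) : Wreath H G)) :=
    (hcomm_base.map inl).op
  have := K.mk_commutatorElement_one_mem (map_mem_reversalPairs j hj hu) hv_shift hcomm
  rwa [← map_commutatorElement] at this

lemma mk_inl_one_mem_reversalPairs (hY : Subgroup.closure Y = ⊤) (hT : Subgroup.closure T = ⊤)
    {z : G} (hz : z ≠ 1) (hzT : ((1 : G), op z) ∈ reversalPairs T) {f : restrictedBase H G}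
    (hf : ∀ x, (f : G → H) x ∈ commutator H) :
    ((inl f : Wreath H G), (1 : (Wreath H G)ᵐᵒᵖ)) ∈ reversalPairs (wreathGens Y T) := by
  set K := reversalPairs (wreathGens Y T)
  let L := K.comap ((MonoidHom.inl _ _).comp inl)
  have hderived : commutator H ≤ L.comap atOneHom := by
    rw [commutator_def, Subgroup.commutator_le]
    intro u _ v _
    exact mk_inl_atOne_commutatorElement_mem_reversalPairs hY hz hzT u v
  have hshift : ∀ a : G, ∀ f ∈ L, wreathAction H G a f ∈ L := by
    intro a f hf
    obtain ⟨a', ha⟩ := exists_mk_op_mem_reversalPairs (hT ▸ Subgroup.mem_top a)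
    have := K.mk_conj_one_mem (map_mem_reversalPairs inr image_inr_subset_wreathGens ha) hf
    show (inl (wreathAction H G a f), 1) ∈ K
    rwa [inl_aut, map_inv]
  exact mem_of_forall_wreathAction_atOne_mem (fun a m hm => hshift a _ (hderived hm)) hf

end WreathPalindromes

/-- Let `H` be a finitely generated group with finite generating set `Y` and
`G` a non-abelian finitely generated group with palindromic width `k = pw(G, X)` for a
finite generating set `X`. Then there is `c ∈ G` (possibly `c = 1`) such that every
element of `H' ≀ G` — i.e. every element `w` of `H ≀ G` whose base component takes values
in `[H, H]` — is a product of at most `k + 1` palindromes with respect to the canonical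
copies of `X ∪ {c}` and of `Y`. -/
theorem derived_wreath_palindromes {H G : Type*} [Group H] [Group G]
    (Y : Finset H) (hY : Subgroup.closure (Y : Set H) = ⊤)
    (X : Finset G) (hX : Subgroup.closure (X : Set G) = ⊤)
    (hna : ∃ a b : G, a * b ≠ b * a)
    (k : ℕ) (hk : palWidth (X : Set G) = (k : ℕ∞)) :
    ∃ c : G, ∀ w : Wreath H G,
      (∀ a : G, (w.left : G → H) a ∈ commutator H) →
      ProdOfPal (wreathGens (Y : Set H) ((X : Set G) ∪ {c})) (k + 1) w := by
  obtain ⟨c, z, hz, hzX⟩ := exists_one_mk_op_mem_reversalPairs_union_singleton hX hna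
  have hXc : Subgroup.closure ((X : Set G) ∪ {c}) = ⊤ :=
    top_unique (hX ▸ Subgroup.closure_mono Set.subset_union_left)
  refine ⟨c, fun w hw => ?_⟩
  have hbase : IsPalindrome (wreathGens (Y : Set H) ((X : Set G) ∪ {c})) (inl w.left) := by
    simpa using isPalindrome_mul_of_mem_reversalPairs (q := 1)
      (mk_inl_one_mem_reversalPairs hY hXc hz hzX hw)
  have hacting : ProdOfPal (wreathGens (Y : Set H) ((X : Set G) ∪ {c})) k (inr w.right) :=
    (prodOfPal_of_palWidth_eq hk w.right).map inr
      ((Set.image_mono Set.subset_union_left).trans image_inr_subset_wreathGens)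
  rw [← inl_left_mul_inr_right w]
  exact hacting.palindrome_mul hbase
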